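/- Fix an integer d ≥ 2 and a constant C ≥ 1. There exist K ≥ 1 and ε_0 > 0 such that for every ε ∈ (0,ε_0) there exists δ_0 > 0 with the following property for all δ ∈ (0,δ_0). Let E ⊆ B(0,1) ⊆ ℝ^d be measurable with vol(E) ≤ C·δ^{d/2−ε}, and suppose that for every δ-tube T, every z ∈ ℝ^d and every ρ ∈ [δ,1] one has vol(E ∩ T ∩ B(z,ρ)) ≤ C·δ^{d−1/2−ε}·ρ^{1/2}. Let 𝒯 be a finite, pairwise δ-separated family of δ-tubes with vol(T ∩ E) ≥ δ^{d−1/2+ε} for every T ∈ 𝒯. Then for every point x ∈ ℝ^d, the number of tubes of 𝒯 containing x is at most δ^{−(d−1)/2 − Kε}. -/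

import Mathlib

open MeasureTheory Metric Set
open scoped ENNReal

noncomputable section

abbrev Euc (d : ℕ) : Type := EuclideanSpace ℝ (Fin d)

/-- The line through `a` with direction `v`. -/
def lineThrough {d : ℕ} (a v : Euc d) : Set (Euc d) :=
  Set.range fun t : ℝ => a + t • v

/-- The `ρ`-tube around the line through `a` with direction `v`: the closed
`ρ`-neighbourhood of the line. -/
def Tube {d : ℕ} (ρ : ℝ) (a v : Euc d) : Set (Euc d) :=
  {x | infDist x (lineThrough a v) ≤ ρ}

/-!
Fix `x` and let `S` be the tubes of `𝒯` through `x`. At the scale `ρ = (δ^{2ε} / 2C)²` the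
Frostman-type hypothesis leaves each `T ∈ S` at least half of its mass `δ^{d-1/2+ε}` in `E`
outside `B(x, ρ)`. A point `y` with `|x - y| ≥ ρ ≥ 4δ` lies in at most `(897/ρ)^{2d}` tubes of `S`:
each of them is the line through a point within `2δ` of `y` with a unit direction within `8δ/ρ` of
that of `x - y`, the Hausdorff distance of the truncated lines is Lipschitz in these data, and a
volume packing argument in `ℝ^d × ℝ^d` counts `δ`-separated data. Double counting the mass of `E`
gives `#S · δ^{d-1/2+ε} ≲ ρ^{-2d} vol(E) ≲ δ^{-8dε} δ^{d/2-ε}`.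
-/

variable {d : ℕ}

lemma lineThrough_smul (a : Euc d) {v : Euc d} {s : ℝ} (hs : s ≠ 0) :
    lineThrough a (s • v) = lineThrough a v := by
  ext z
  constructor
  · rintro ⟨t, rfl⟩
    exact ⟨t * s, by simp [mul_smul]⟩
  · rintro ⟨t, rfl⟩
    exact ⟨t / s, by simp [smul_smul, div_mul_cancel₀ _ hs]⟩

lemma lineThrough_eq_of_mem {a v b : Euc d} (hb : b ∈ lineThrough a v) :
    lineThrough b v = lineThrough a v := by
  obtain ⟨s, rfl⟩ := hb
  ext z
  constructor
  · rintro ⟨t, rfl⟩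
    exact ⟨s + t, by simp [add_smul, add_assoc]⟩
  · rintro ⟨t, rfl⟩
    exact ⟨t - s, by simp [sub_smul, add_assoc]⟩

lemma lineThrough_sub_eq_of_mem {a v b c : Euc d} (hb : b ∈ lineThrough a v)
    (hc : c ∈ lineThrough a v) (hbc : b ≠ c) : lineThrough b (c - b) = lineThrough a v := by
  obtain ⟨s, rfl⟩ := hb
  obtain ⟨t, rfl⟩ := hc
  have hts : t - s ≠ 0 := sub_ne_zero.2 fun h => hbc (by rw [h])
  rw [show a + t • v - (a + s • v) = (t - s) • v by rw [sub_smul]; abel,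
    lineThrough_smul _ hts, lineThrough_eq_of_mem ⟨s, rfl⟩]

lemma exists_dist_lt_of_mem_Tube {δ : ℝ} (hδ : 0 < δ) {x a v : Euc d} (hx : x ∈ Tube δ a v) :
    ∃ X ∈ lineThrough a v, dist x X < 2 * δ :=
  (infDist_lt_iff (s := lineThrough a v) ⟨a, 0, by simp⟩).1 (hx.trans_lt (by linarith))

/-- Shrinking `z` towards `b` by the factor `(1 + 2η)⁻¹` lands in `closedBall 0 2` by convexity
of the norm. -/
lemma exists_mem_lineThrough_inter_closedBall_of_norm_le {b u z : Euc d} {η : ℝ} (hb : ‖b‖ ≤ 3 / 2)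
    (hz : z ∈ lineThrough b u) (hη : 0 ≤ η) (hzη : ‖z‖ ≤ 2 + η) :
    ∃ w ∈ lineThrough b u ∩ closedBall 0 2, dist z w ≤ 7 * η := by
  obtain ⟨t, rfl⟩ := hz
  dsimp only at hzη ⊢
  set c := (1 + 2 * η)⁻¹
  have hc : c * (1 + 2 * η) = 1 := inv_mul_cancel₀ (by positivity)
  have hc0 : 0 < c := by positivity
  have hc1 : c ≤ 1 := inv_le_one_of_one_le₀ (by linarith)
  refine ⟨b + (c * t) • u, ⟨⟨c * t, rfl⟩, ?_⟩, ?_⟩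
  · have e : b + (c * t) • u = (1 - c) • b + c • (b + t • u) := by module
    rw [mem_closedBall_zero_iff, e]
    calc _ ≤ (1 - c) * ‖b‖ + c * ‖b + t • u‖ := by
          refine (norm_add_le _ _).trans_eq ?_
          rw [norm_smul, norm_smul, Real.norm_of_nonneg (by linarith), Real.norm_of_nonneg hc0.le]
      _ ≤ (1 - c) * (3 / 2) + c * (2 + η) := by gcongr
      _ = 2 := by linear_combination (1 / 2) * hc
  · have e : b + t • u - (b + (c * t) • u) = (1 - c) • (b + t • u - b) := by module
    rw [dist_eq_norm, e, norm_smul, Real.norm_of_nonneg (by linarith)]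
    calc (1 - c) * ‖b + t • u - b‖ ≤ (1 - c) * (2 + η + 3 / 2) := by
          gcongr
          exact (norm_sub_le _ _).trans (by linarith)
      _ ≤ 7 * η := by nlinarith

lemma exists_mem_lineThrough_inter_closedBall_dist_le {b b' u u' x : Euc d} (hu : ‖u‖ = 1)
    (hb : ‖b‖ ≤ 3 / 2) (hb' : ‖b'‖ ≤ 3 / 2) (hx : x ∈ lineThrough b u ∩ closedBall 0 2) :
    ∃ y ∈ lineThrough b' u' ∩ closedBall 0 2, dist x y ≤ 28 * (‖b - b'‖ + ‖u - u'‖) := by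
  obtain ⟨⟨t, rfl⟩, hx2⟩ := hx
  dsimp only
  rw [mem_closedBall_zero_iff] at hx2
  have ht : |t| ≤ 7 / 2 := by
    have := norm_sub_le (b + t • u) b
    rw [add_sub_cancel_left, norm_smul, hu, mul_one, Real.norm_eq_abs] at this
    linarith
  have hz : ‖(b + t • u) - (b' + t • u')‖ ≤ ‖b - b'‖ + 7 / 2 * ‖u - u'‖ := by
    rw [show b + t • u - (b' + t • u') = (b - b') + t • (u - u') by module]
    refine (norm_add_le _ _).trans ?_
    rw [norm_smul, Real.norm_eq_abs]
    gcongr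
  have hzη : ‖b' + t • u'‖ ≤ 2 + (‖b - b'‖ + 7 / 2 * ‖u - u'‖) := by
    linarith [norm_le_norm_add_norm_sub' (b' + t • u') (b + t • u),
      norm_sub_rev (b + t • u) (b' + t • u')]
  obtain ⟨w, hw, hzw⟩ :=
    exists_mem_lineThrough_inter_closedBall_of_norm_le hb' ⟨t, rfl⟩ (by positivity) hzη
  refine ⟨w, hw, ?_⟩
  dsimp only at hzw
  linarith [dist_triangle (b + t • u) (b' + t • u') w, dist_eq_norm (b + t • u) (b' + t • u'),
    norm_nonneg (b - b')]

lemma hausdorffDist_lineThrough_inter_closedBall_le {b b' u u' : Euc d} (hu : ‖u‖ = 1)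
    (hu' : ‖u'‖ = 1) (hb : ‖b‖ ≤ 3 / 2) (hb' : ‖b'‖ ≤ 3 / 2) :
    hausdorffDist (lineThrough b u ∩ closedBall 0 2) (lineThrough b' u' ∩ closedBall 0 2)
      ≤ 28 * (‖b - b'‖ + ‖u - u'‖) := by
  refine hausdorffDist_le_of_mem_dist (by positivity)
    (fun x hx => exists_mem_lineThrough_inter_closedBall_dist_le hu hb hb' hx) fun y hy => ?_
  rw [norm_sub_rev b, norm_sub_rev u]
  exact exists_mem_lineThrough_inter_closedBall_dist_le hu' hb' hb hy

lemma norm_inv_norm_smul_sub_inv_norm_smul_le {E : Type*} [NormedAddCommGroup E]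
    [NormedSpace ℝ E] {v w : E} (hv : v ≠ 0) (hw : w ≠ 0) :
    ‖‖v‖⁻¹ • v - ‖w‖⁻¹ • w‖ ≤ 2 * ‖v - w‖ / ‖v‖ := by
  have hv' : 0 < ‖v‖ := norm_pos_iff.2 hv
  have hw' : 0 < ‖w‖ := norm_pos_iff.2 hw
  have hsplit : ‖‖v‖⁻¹ • w - ‖w‖⁻¹ • w‖ = |‖w‖ - ‖v‖| / ‖v‖ := by
    rw [← sub_smul, norm_smul, Real.norm_eq_abs,
      show ‖v‖⁻¹ - ‖w‖⁻¹ = (‖w‖ - ‖v‖) / (‖v‖ * ‖w‖) by field_simp, abs_div,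
      abs_of_pos (by positivity : 0 < ‖v‖ * ‖w‖)]
    field_simp
  calc ‖‖v‖⁻¹ • v - ‖w‖⁻¹ • w‖ ≤ ‖‖v‖⁻¹ • v - ‖v‖⁻¹ • w‖ + ‖‖v‖⁻¹ • w - ‖w‖⁻¹ • w‖ :=
        norm_sub_le_norm_sub_add_norm_sub _ _ _
    _ ≤ ‖v - w‖ / ‖v‖ + ‖v - w‖ / ‖v‖ := by
        rw [← smul_sub, norm_smul, norm_inv, norm_norm, inv_mul_eq_div, hsplit]
        gcongr
        rw [norm_sub_rev]
        exact abs_norm_sub_norm_le w v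
    _ = 2 * ‖v - w‖ / ‖v‖ := by ring

lemma exists_lineThrough_eq_of_mem_Tube {δ : ℝ} {x y a v : Euc d} (hδ : 0 < δ)
    (hx : x ∈ Tube δ a v) (hy : y ∈ Tube δ a v) (hxy : 4 * δ ≤ dist x y) :
    ∃ b u : Euc d, lineThrough b u = lineThrough a v ∧ ‖u‖ = 1 ∧ dist b y < 2 * δ ∧
      dist u (‖x - y‖⁻¹ • (x - y)) ≤ 8 * δ / dist x y := by
  obtain ⟨X, hX, hxX⟩ := exists_dist_lt_of_mem_Tube hδ hx
  obtain ⟨Y, hY, hyY⟩ := exists_dist_lt_of_mem_Tube hδ hy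
  have hXY : ‖(x - y) - (X - Y)‖ < 4 * δ := by
    rw [show x - y - (X - Y) = (x - X) - (y - Y) by abel]
    refine (norm_sub_le _ _).trans_lt ?_
    rw [← dist_eq_norm, ← dist_eq_norm]
    linarith
  have hXY0 : X - Y ≠ 0 := by
    rintro h
    rw [h, sub_zero, ← dist_eq_norm] at hXY
    linarith
  have hxy0 : x - y ≠ 0 := by
    rw [sub_ne_zero, ← dist_pos]
    linarith
  refine ⟨Y, ‖X - Y‖⁻¹ • (X - Y), ?_, norm_smul_inv_norm hXY0, by rwa [dist_comm], ?_⟩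
  · rw [lineThrough_smul _ (inv_ne_zero (norm_ne_zero_iff.2 hXY0)),
      lineThrough_sub_eq_of_mem hY hX (sub_ne_zero.1 hXY0).symm]
  · rw [dist_comm, dist_eq_norm, dist_eq_norm x]
    calc _ ≤ 2 * ‖(x - y) - (X - Y)‖ / ‖x - y‖ :=
          norm_inv_norm_smul_sub_inv_norm_smul_le hxy0 hXY0
      _ ≤ 8 * δ / ‖x - y‖ := by gcongr ?_ / _; linarith

lemma card_le_of_le_dist_of_mem_closedBall {E ι : Type*} [NormedAddCommGroup E]
    [NormedSpace ℝ E] [MeasurableSpace E] [BorelSpace E] [FiniteDimensional ℝ E]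
    (μ : Measure E) [μ.IsAddHaarMeasure] {s r : ℝ} (hs : 0 < s) (hr : 0 ≤ r) {c : E}
    {S : Finset ι} {f : ι → E} (hf : ∀ i ∈ S, f i ∈ closedBall c r)
    (hsep : ∀ i ∈ S, ∀ j ∈ S, i ≠ j → s ≤ dist (f i) (f j)) :
    (S.card : ℝ) ≤ (2 * r / s + 1) ^ Module.finrank ℝ E := by
  have hdisj : (S : Set ι).PairwiseDisjoint fun i => ball (f i) (s / 2) :=
    fun i hi j hj hij => ball_disjoint_ball (by linarith [hsep i hi j hj hij])
  have hsub : ⋃ i ∈ S, ball (f i) (s / 2) ⊆ ball c (r + s / 2) :=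
    iUnion₂_subset fun i hi z hz => by
      rw [mem_ball] at hz ⊢
      linarith [dist_triangle z (f i) c, mem_closedBall.1 (hf i hi)]
  have hvol : (S.card : ℝ≥0∞) * ENNReal.ofReal ((s / 2) ^ Module.finrank ℝ E) * μ (ball 0 1)
      ≤ ENNReal.ofReal ((r + s / 2) ^ Module.finrank ℝ E) * μ (ball 0 1) :=
    calc _ = ∑ i ∈ S, μ (ball (f i) (s / 2)) := by
          simp [Measure.addHaar_ball_of_pos μ _ (half_pos hs), mul_assoc]
      _ = μ (⋃ i ∈ S, ball (f i) (s / 2)) :=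
          (measure_biUnion_finset hdisj fun _ _ => measurableSet_ball).symm
      _ ≤ μ (ball c (r + s / 2)) := measure_mono hsub
      _ = _ := Measure.addHaar_ball_of_pos μ _ (by positivity)
  rw [ENNReal.mul_le_mul_iff_left (measure_ball_pos μ 0 one_pos).ne' measure_ball_lt_top.ne,
    ← ENNReal.ofReal_natCast, ← ENNReal.ofReal_mul (by positivity),
    ENNReal.ofReal_le_ofReal_iff (by positivity)] at hvol
  rw [show 2 * r / s + 1 = (r + s / 2) / (s / 2) by field_simp, div_pow,
    le_div_iff₀ (by positivity)]
  exact hvol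

def SeparatedTubes (δ : ℝ) (𝒯 : Set (Euc d × Euc d)) : Prop :=
  𝒯.Pairwise fun p q => δ ≤ hausdorffDist (lineThrough p.1 p.2 ∩ closedBall 0 2)
    (lineThrough q.1 q.2 ∩ closedBall 0 2)

lemma card_le_of_forall_mem_Tube_mem_Tube {δ ρ : ℝ} {x y : Euc d} {S : Finset (Euc d × Euc d)}
    (hδ : 0 < δ) (hδρ : 4 * δ ≤ ρ) (hρ : ρ ≤ 1) (hy : ‖y‖ ≤ 1) (hxy : ρ ≤ dist x y)
    (hsep : SeparatedTubes δ (S : Set (Euc d × Euc d)))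
    (hS : ∀ p ∈ S, x ∈ Tube δ p.1 p.2 ∧ y ∈ Tube δ p.1 p.2) :
    (S.card : ℝ) ≤ (897 / ρ) ^ (2 * d) := by
  have hρ0 : 0 < ρ := by linarith
  have hchart : ∀ p ∈ S, ∃ b u : Euc d, lineThrough b u = lineThrough p.1 p.2 ∧ ‖u‖ = 1 ∧
      dist b y < 2 * δ ∧ dist u (‖x - y‖⁻¹ • (x - y)) ≤ 8 * δ / dist x y := fun p hp =>
    exists_lineThrough_eq_of_mem_Tube hδ (hS p hp).1 (hS p hp).2 (hδρ.trans hxy)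
  choose! b u hline hunit hby hux using hchart
  have hb : ∀ p ∈ S, ‖b p‖ ≤ 3 / 2 := fun p hp => by
    linarith [norm_le_norm_add_norm_sub' (b p) y, dist_eq_norm (b p) y, hby p hp]
  have hchart_mem : ∀ p ∈ S, (b p, u p) ∈ closedBall (y, ‖x - y‖⁻¹ • (x - y)) (8 * δ / ρ) :=
    fun p hp => by
      rw [mem_closedBall, Prod.dist_eq, max_le_iff]
      constructor
      · rw [le_div_iff₀ hρ0]
        nlinarith [hby p hp]
      · exact (hux p hp).trans (by gcongr)
  have hchart_sep : ∀ p ∈ S, ∀ q ∈ S, p ≠ q → δ / 56 ≤ dist (b p, u p) (b q, u q) := by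
    intro p hp q hq hpq
    have := (hsep hp hq hpq).trans (hline p hp ▸ hline q hq ▸
      hausdorffDist_lineThrough_inter_closedBall_le (hunit p hp) (hunit q hq) (hb p hp) (hb q hq))
    rw [Prod.dist_eq, dist_eq_norm, dist_eq_norm]
    linarith [le_max_left ‖b p - b q‖ ‖u p - u q‖, le_max_right ‖b p - b q‖ ‖u p - u q‖]
  have : (volume : Measure (Euc d × Euc d)).IsAddHaarMeasure := by
    rw [Measure.volume_eq_prod]
    infer_instance
  have hcard := card_le_of_le_dist_of_mem_closedBall volume (by positivity) (by positivity)
    hchart_mem hchart_sep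
  rw [Module.finrank_prod, finrank_euclideanSpace_fin, ← two_mul] at hcard
  refine hcard.trans (pow_le_pow_left₀ (by positivity) ?_ _)
  rw [show 2 * (8 * δ / ρ) / (δ / 56) = 896 / ρ by field_simp; ring,
    div_add_one hρ0.ne', div_le_div_iff_of_pos_right hρ0]
  linarith

lemma sum_measure_le_mul_measure_of_card_le {α ι : Type*} [MeasurableSpace α] (μ : Measure α)
    (S : Finset ι) {A : ι → Set α} {E : Set α} (hA : ∀ i ∈ S, MeasurableSet (A i))
    (hAE : ∀ i ∈ S, A i ⊆ E) {N : ℝ≥0∞}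
    (hN : ∀ y, ∀ T ⊆ S, (∀ i ∈ T, y ∈ A i) → (T.card : ℝ≥0∞) ≤ N) :
    ∑ i ∈ S, μ (A i) ≤ N * μ E := by
  classical
  have hpt : ∀ y, ∑ i ∈ S, (A i).indicator 1 y ≤ E.indicator (fun _ => N) y := fun y => by
    simp only [Set.indicator_apply, Pi.one_apply]
    rw [Finset.sum_boole]
    by_cases h : ∃ i ∈ S, y ∈ A i
    · obtain ⟨i, hi, hy⟩ := h
      rw [if_pos (hAE i hi hy)]
      exact hN y _ (Finset.filter_subset _ S) fun j hj => (Finset.mem_filter.1 hj).2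
    · push Not at h
      rw [Finset.filter_false_of_mem h, Finset.card_empty, Nat.cast_zero]
      exact zero_le
  calc ∑ i ∈ S, μ (A i) = ∫⁻ y, ∑ i ∈ S, (A i).indicator 1 y ∂μ := by
        rw [lintegral_finsetSum' S fun i hi => (measurable_one.indicator (hA i hi)).aemeasurable]
        exact Finset.sum_congr rfl fun i hi => (lintegral_indicator_one (hA i hi)).symm
    _ ≤ ∫⁻ y, E.indicator (fun _ => N) y ∂μ := lintegral_mono hpt
    _ ≤ N * μ E := lintegral_indicator_const_le E N

lemma le_measure_sdiff_of_measure_inter_le {α : Type*} [MeasurableSpace α] {μ : Measure α}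
    {s t : Set α} {a : ℝ≥0∞} (ha : a ≠ ∞) (hs : a + a ≤ μ s) (hst : μ (s ∩ t) ≤ a) :
    a ≤ μ (s \ t) :=
  (ENNReal.add_le_add_iff_left ha).1
    (hs.trans ((measure_le_inter_add_sdiff μ s t).trans (add_le_add hst le_rfl)))

lemma card_mul_le_of_forall_mem_Tube {δ ρ : ℝ} {E : Set (Euc d)} {S : Finset (Euc d × Euc d)}
    {x : Euc d} {m : ℝ≥0∞} (hδ : 0 < δ) (hδρ : 4 * δ ≤ ρ) (hρ : ρ ≤ 1)
    (hE : E ⊆ closedBall 0 1) (hEm : MeasurableSet E)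
    (hsep : SeparatedTubes δ (S : Set (Euc d × Euc d)))
    (hm : ∀ p ∈ S, m ≤ volume ((Tube δ p.1 p.2 ∩ E) \ closedBall x ρ))
    (hS : ∀ p ∈ S, x ∈ Tube δ p.1 p.2) :
    S.card * m ≤ ENNReal.ofReal ((897 / ρ) ^ (2 * d)) * volume E := by
  have hTube : ∀ p : Euc d × Euc d, MeasurableSet (Tube δ p.1 p.2) := fun p =>
    (isClosed_le (continuous_infDist_pt _) continuous_const).measurableSet
  calc (S.card : ℝ≥0∞) * m ≤ ∑ p ∈ S, volume ((Tube δ p.1 p.2 ∩ E) \ closedBall x ρ) := by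
        rw [← nsmul_eq_mul]
        exact Finset.card_nsmul_le_sum _ _ _ hm
    _ ≤ _ := by
        refine sum_measure_le_mul_measure_of_card_le _ _
          (fun p _ => ((hTube p).inter hEm).diff measurableSet_closedBall)
          (fun p _ y hy => hy.1.2) fun y T hTS hT => ?_
        rcases T.eq_empty_or_nonempty with rfl | ⟨p, hp⟩
        · simp
        obtain ⟨⟨-, hyE⟩, hyx⟩ := hT p hp
        rw [← ENNReal.ofReal_natCast]
        refine ENNReal.ofReal_le_ofReal (card_le_of_forall_mem_Tube_mem_Tube hδ hδρ hρ
          (mem_closedBall_zero_iff.1 (hE hyE)) ?_ (hsep.mono (Finset.coe_subset.2 hTS))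
          fun q hq => ⟨hS q (hTS hq), (hT q hq).1.1⟩)
        rw [dist_comm]
        exact (not_le.1 hyx).le

lemma le_one_and_mul_rpow_le_one {A c δ : ℝ} (hA : 1 ≤ A) (hc : 0 < c) (hδ : 0 < δ)
    (hδA : δ < A ^ (-c⁻¹)) : δ ≤ 1 ∧ A * δ ^ c ≤ 1 := by
  refine ⟨hδA.le.trans (Real.rpow_le_one_of_one_le_of_nonpos hA (by simp [hc.le])), ?_⟩
  have h := Real.rpow_le_rpow hδ.le hδA.le hc.le
  rw [← Real.rpow_mul (by positivity), neg_mul, inv_mul_cancel₀ hc.ne', Real.rpow_neg_one] at h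
  calc A * δ ^ c ≤ A * A⁻¹ := by gcongr
    _ = 1 := mul_inv_cancel₀ (by positivity)

/-- The witness is `ρ = (δ^{2ε} / 2C)²`. -/
lemma exists_bush_scale (d : ℕ) {C ε δ : ℝ} (hC : 1 ≤ C) (hε6 : ε ≤ 1 / 6)
    (hδ : 0 < δ) (hδ1 : δ ≤ 1) (hs : 16 * C ^ 3 * (3588 * C ^ 2) ^ (2 * d) * δ ^ (2 * ε) ≤ 1) :
    ∃ ρ, 4 * δ ≤ ρ ∧ ρ ≤ 1 ∧
      C * δ ^ ((d : ℝ) - 1 / 2 - ε) * ρ ^ ((1 : ℝ) / 2) = δ ^ ((d : ℝ) - 1 / 2 + ε) / 2 ∧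
      (897 / ρ) ^ (2 * d) * (C * δ ^ ((d : ℝ) / 2 - ε))
        ≤ δ ^ ((d : ℝ) - 1 / 2 + ε) / 2 * δ ^ (-(((d : ℝ) - 1) / 2) - (8 * d + 4) * ε) := by
  set s := δ ^ (2 * ε)
  set P := δ ^ ((d : ℝ) - 1 / 2 - ε)
  set Q := δ ^ (-(((d : ℝ) - 1) / 2))
  set B := (3588 * C ^ 2) ^ (2 * d) with hB_def
  have hs0 : 0 < s := by positivity
  have hB : 1 ≤ B := one_le_pow₀ (by nlinarith)
  have hP : δ ^ ((d : ℝ) - 1 / 2 + ε) = P * s := by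
    rw [← Real.rpow_add hδ]; ring_nf
  have hPQ : δ ^ ((d : ℝ) / 2 - ε) = P * Q := by
    rw [← Real.rpow_add hδ]; ring_nf
  have hQ : δ ^ (-(((d : ℝ) - 1) / 2) - (8 * d + 4) * ε) = Q / s ^ (4 * d + 2) := by
    rw [← Real.rpow_natCast, ← Real.rpow_mul hδ.le, ← Real.rpow_sub hδ]
    push_cast; ring_nf
  have hδs : δ ≤ s ^ 3 := by
    rw [← Real.rpow_natCast, ← Real.rpow_mul hδ.le]
    simpa using
      Real.rpow_le_rpow_of_exponent_ge hδ hδ1 (by push_cast; linarith : 2 * ε * (3 : ℕ) ≤ 1)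
  have hCs : 16 * C ^ 2 * s ≤ 1 :=
    calc 16 * C ^ 2 * s = 16 * C ^ 2 * 1 * s := by ring
      _ ≤ 16 * C ^ 2 * (C * B) * s := by gcongr; nlinarith
      _ = 16 * C ^ 3 * B * s := by ring
      _ ≤ 1 := hs
  have hBs : 2 * C * B * s ≤ 1 :=
    calc 2 * C * B * s ≤ 16 * C ^ 3 * B * s := by gcongr <;> nlinarith
      _ ≤ 1 := hs
  refine ⟨(s / (2 * C)) ^ 2, ?_, ?_, ?_, ?_⟩
  · rw [div_pow, le_div_iff₀ (by positivity)]
    nlinarith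
  · rw [div_pow, div_le_one (by positivity)]
    exact pow_le_pow_left₀ hs0.le (by nlinarith) 2
  · rw [← Real.sqrt_eq_rpow, Real.sqrt_sq (by positivity), hP]
    field_simp
  · rw [hP, hPQ, hQ, show 897 / (s / (2 * C)) ^ 2 = 3588 * C ^ 2 / s ^ 2 by field_simp; ring,
      div_pow, ← hB_def, ← pow_mul, show 2 * (2 * d) = 4 * d by ring]
    calc B / s ^ (4 * d) * (C * (P * Q)) = 2 * C * B * s * (P * Q / (2 * s ^ (4 * d) * s)) := by
          field_simp
      _ ≤ 1 * (P * Q / (2 * s ^ (4 * d) * s)) := by gcongr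
      _ = P * s / 2 * (Q / s ^ (4 * d + 2)) := by
          field_simp
          ring

theorem bush_bound_general (d : ℕ) (C : ℝ) (hC : 1 ≤ C) :
    ∃ K : ℝ, 1 ≤ K ∧ ∃ ε₀ : ℝ, 0 < ε₀ ∧ ∀ ε : ℝ, 0 < ε → ε < ε₀ →
      ∃ δ₀ : ℝ, 0 < δ₀ ∧ ∀ δ : ℝ, 0 < δ → δ < δ₀ →
      ∀ (E : Set (Euc d)) (𝒯 : Finset (Euc d × Euc d)),
        E ⊆ closedBall (0 : Euc d) 1 →
        MeasurableSet E →
        volume E ≤ ENNReal.ofReal (C * δ ^ ((d : ℝ) / 2 - ε)) →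
        (∀ (a v : Euc d), v ≠ 0 → ∀ z : Euc d, ∀ ρ : ℝ, δ ≤ ρ → ρ ≤ 1 →
          volume (E ∩ Tube δ a v ∩ closedBall z ρ)
            ≤ ENNReal.ofReal (C * δ ^ ((d : ℝ) - 1 / 2 - ε) * ρ ^ ((1 : ℝ) / 2))) →
        (∀ p ∈ 𝒯, p.2 ≠ 0) →
        (∀ p ∈ 𝒯, ∀ q ∈ 𝒯, p ≠ q →
          δ ≤ hausdorffDist (lineThrough p.1 p.2 ∩ closedBall (0 : Euc d) 2)
                (lineThrough q.1 q.2 ∩ closedBall (0 : Euc d) 2)) →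
        (∀ p ∈ 𝒯, ENNReal.ofReal (δ ^ ((d : ℝ) - 1 / 2 + ε))
          ≤ volume (Tube δ p.1 p.2 ∩ E)) →
        ∀ x : Euc d,
          (({p ∈ (𝒯 : Set (Euc d × Euc d)) | x ∈ Tube δ p.1 p.2}.ncard : ℝ))
            ≤ δ ^ (-(((d : ℝ) - 1) / 2) - K * ε) := by
  classical
  set A := 16 * C ^ 3 * (3588 * C ^ 2) ^ (2 * d)
  have hA : 1 ≤ A := one_le_mul_of_one_le_of_one_le
    (by nlinarith [one_le_pow₀ (n := 3) hC]) (one_le_pow₀ (by nlinarith))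
  refine ⟨8 * d + 4, by linarith [d.cast_nonneg (α := ℝ)], 1 / 6, by norm_num,
    fun ε hε hε₀ => ⟨A ^ (-(2 * ε)⁻¹), by positivity,
    fun δ hδ hδ₀ E 𝒯 hE hEm hEvol hFrost hv hsep hmass x => ?_⟩⟩
  obtain ⟨hδ1, hs⟩ := le_one_and_mul_rpow_le_one hA (by positivity) hδ hδ₀
  obtain ⟨ρ, hδρ, hρ1, hρ, hcount⟩ := exists_bush_scale d hC hε₀.le hδ hδ1 hs
  set m := δ ^ ((d : ℝ) - 1 / 2 + ε) / 2
  set S := 𝒯.filter fun p => x ∈ Tube δ p.1 p.2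
  have hout : ∀ p ∈ S, ENNReal.ofReal m ≤ volume ((Tube δ p.1 p.2 ∩ E) \ closedBall x ρ) := by
    intro p hp
    obtain ⟨hp𝒯, -⟩ := Finset.mem_filter.1 hp
    refine le_measure_sdiff_of_measure_inter_le ENNReal.ofReal_ne_top ?_ ?_
    · rw [← ENNReal.ofReal_add (by positivity) (by positivity), add_halves]
      exact hmass p hp𝒯
    · rw [inter_comm (Tube δ p.1 p.2), ← hρ]
      exact hFrost p.1 p.2 (hv p hp𝒯) x ρ (by linarith) hρ1
  have hbush := card_mul_le_of_forall_mem_Tube hδ hδρ hρ1 hE hEm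
    (fun p hp q hq hpq => hsep p (Finset.mem_filter.1 hp).1 q (Finset.mem_filter.1 hq).1 hpq)
    hout fun p hp => (Finset.mem_filter.1 hp).2
  have key : (S.card : ℝ≥0∞) * ENNReal.ofReal m
      ≤ ENNReal.ofReal (m * δ ^ (-(((d : ℝ) - 1) / 2) - (8 * d + 4) * ε)) := by
    refine hbush.trans ((mul_le_mul' le_rfl hEvol).trans ?_)
    rw [← ENNReal.ofReal_mul' (by positivity)]
    exact ENNReal.ofReal_le_ofReal hcount
  rw [← ENNReal.ofReal_natCast, ← ENNReal.ofReal_mul (by positivity),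
    ENNReal.ofReal_le_ofReal_iff (by positivity), mul_comm] at key
  rw [show {p ∈ (𝒯 : Set (Euc d × Euc d)) | x ∈ Tube δ p.1 p.2} = S by ext; simp [S],
    Set.ncard_coe_finset]
  exact le_of_mul_le_mul_left key (by positivity)

/-- **Bush bound (inequality (2.2)).** No point lies in too many tubes of the family. -/
theorem bush_bound (d : ℕ) (hd : 2 ≤ d) (C : ℝ) (hC : 1 ≤ C) :
    ∃ K : ℝ, 1 ≤ K ∧ ∃ ε₀ : ℝ, 0 < ε₀ ∧ ∀ ε : ℝ, 0 < ε → ε < ε₀ →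
      ∃ δ₀ : ℝ, 0 < δ₀ ∧ ∀ δ : ℝ, 0 < δ → δ < δ₀ →
      ∀ (E : Set (Euc d)) (𝒯 : Finset (Euc d × Euc d)),
        E ⊆ closedBall (0 : Euc d) 1 →
        MeasurableSet E →
        volume E ≤ ENNReal.ofReal (C * δ ^ ((d : ℝ) / 2 - ε)) →
        (∀ (a v : Euc d), v ≠ 0 → ∀ z : Euc d, ∀ ρ : ℝ, δ ≤ ρ → ρ ≤ 1 →
          volume (E ∩ Tube δ a v ∩ closedBall z ρ)
            ≤ ENNReal.ofReal (C * δ ^ ((d : ℝ) - 1 / 2 - ε) * ρ ^ ((1 : ℝ) / 2))) →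
        (∀ p ∈ 𝒯, p.2 ≠ 0) →
        (∀ p ∈ 𝒯, ∀ q ∈ 𝒯, p ≠ q →
          δ ≤ hausdorffDist (lineThrough p.1 p.2 ∩ closedBall (0 : Euc d) 2)
                (lineThrough q.1 q.2 ∩ closedBall (0 : Euc d) 2)) →
        (∀ p ∈ 𝒯, ENNReal.ofReal (δ ^ ((d : ℝ) - 1 / 2 + ε))
          ≤ volume (Tube δ p.1 p.2 ∩ E)) →
        ∀ x : Euc d,
          (({p ∈ (𝒯 : Set (Euc d × Euc d)) | x ∈ Tube δ p.1 p.2}.ncard : ℝ))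
            ≤ δ ^ (-(((d : ℝ) - 1) / 2) - K * ε) :=
  bush_bound_general d C hC
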